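/- For ε ∈ (0,1/2) and δ_k := ε^k/(ε^k+(1-ε)^k), the sequence (1/h(δ_k))·(δ_k + (1+δ_k)·h(δ_k/(1+δ_k))) converges to 1 as k → ∞, where h is the binary entropy function. -/

import Mathlib

/-!
As `δ → 0⁺`, both `h δ` and `δ + (1 + δ) h (δ / (1 + δ))` are `-δ log₂ δ + O(δ)`: the first because
`-(1 - δ) log₂ (1 - δ) = O(δ)`, the second because
`(1 + δ) h (δ / (1 + δ)) = -δ log₂ δ + (1 + δ) log₂ (1 + δ)`. Since `δ = o(δ log₂ δ)`, both are
asymptotically equivalent to `-δ log₂ δ`, so their ratio tends to `1`; and `δ_k → 0⁺` because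
`δ_k ≤ (ε / (1 - ε))ᵏ`.
-/

open Filter Real Topology Asymptotics

/-- The binary entropy function (base-2 logarithm), with `h 0 = h 1 = 0`. -/
noncomputable def binEnt (x : ℝ) : ℝ := -(x * Real.logb 2 x) - (1 - x) * Real.logb 2 (1 - x)

lemma binEnt_eq_binEntropy_div_log_two (x : ℝ) : binEnt x = binEntropy x / log 2 := by
  simp only [binEnt, binEntropy_eq_negMulLog_add_negMulLog_one_sub, negMulLog, logb]
  ring

lemma binEnt_pos {x : ℝ} (hx₀ : 0 < x) (hx₁ : x < 1) : 0 < binEnt x := by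
  rw [binEnt_eq_binEntropy_div_log_two]
  exact div_pos (binEntropy_pos hx₀ hx₁) (log_pos one_lt_two)

lemma one_add_mul_binEnt_div_one_add {δ : ℝ} (hδ : 0 < δ) :
    (1 + δ) * binEnt (δ / (1 + δ)) = -(δ * logb 2 δ) + (1 + δ) * logb 2 (1 + δ) := by
  have h1δ : (1 : ℝ) + δ ≠ 0 := by positivity
  have hsub : 1 - δ / (1 + δ) = (1 + δ)⁻¹ := by field_simp; ring
  rw [binEnt, hsub, logb_div hδ.ne' h1δ, logb_inv]
  field_simp
  ring

lemma isBigO_self_nhds_zero_of_differentiableAt {f : ℝ → ℝ} (hf : DifferentiableAt ℝ f 0)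
    (hf₀ : f 0 = 0) : f =O[𝓝 0] fun δ => δ := by
  simpa [hf₀] using hf.isBigO_sub

lemma isLittleO_self_mul_logb_nhdsGT_zero :
    (fun δ : ℝ => δ) =o[𝓝[>] 0] fun δ => δ * logb 2 δ := by
  have hlogb : (fun _ => (1 : ℝ)) =o[𝓝[>] 0] fun δ => logb 2 δ := by
    rw [isLittleO_one_left_iff]
    exact tendsto_abs_atBot_atTop.comp (tendsto_logb_nhdsGT_zero one_lt_two)
  simpa using (isBigO_refl (fun δ : ℝ => δ) _).mul_isLittleO hlogb

lemma isEquivalent_neg_mul_logb_add_of_isBigO {r : ℝ → ℝ} (hr : r =O[𝓝[>] 0] fun δ => δ) :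
    (fun δ => -(δ * logb 2 δ) + r δ) ~[𝓝[>] 0] fun δ => -(δ * logb 2 δ) := by
  refine (hr.trans_isLittleO isLittleO_self_mul_logb_nhdsGT_zero).neg_right.congr_left ?_
  intro δ
  simp

lemma binEnt_isEquivalent_nhdsGT_zero : binEnt ~[𝓝[>] 0] fun δ => -(δ * logb 2 δ) := by
  have hr : (fun δ : ℝ => -((1 - δ) * logb 2 (1 - δ))) =O[𝓝[>] 0] fun δ => δ :=
    (isBigO_self_nhds_zero_of_differentiableAt
      (by simp only [logb]; fun_prop (disch := norm_num)) (by simp)).mono nhdsWithin_le_nhds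
  refine (isEquivalent_neg_mul_logb_add_of_isBigO hr).congr_left (Eventually.of_forall fun δ => ?_)
  simp only [binEnt]
  ring

lemma add_one_add_mul_binEnt_div_one_add_isEquivalent_nhdsGT_zero :
    (fun δ : ℝ => δ + (1 + δ) * binEnt (δ / (1 + δ))) ~[𝓝[>] 0] fun δ => -(δ * logb 2 δ) := by
  have hr : (fun δ : ℝ => δ + (1 + δ) * logb 2 (1 + δ)) =O[𝓝[>] 0] fun δ => δ :=
    (isBigO_self_nhds_zero_of_differentiableAt
      (by simp only [logb]; fun_prop (disch := norm_num)) (by simp)).mono nhdsWithin_le_nhds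
  refine (isEquivalent_neg_mul_logb_add_of_isBigO hr).congr_left ?_
  filter_upwards [self_mem_nhdsWithin] with δ (hδ : 0 < δ)
  rw [one_add_mul_binEnt_div_one_add hδ]
  ring

lemma tendsto_binEnt_ratio_nhdsGT_zero :
    Tendsto (fun δ : ℝ => (1 / binEnt δ) * (δ + (1 + δ) * binEnt (δ / (1 + δ))))
      (𝓝[>] 0) (𝓝 1) := by
  have hne : ∀ᶠ δ in 𝓝[>] (0 : ℝ), binEnt δ ≠ 0 := by
    filter_upwards [Ioo_mem_nhdsGT one_pos] with δ hδ
    exact (binEnt_pos hδ.1 hδ.2).ne'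
  have hequiv := add_one_add_mul_binEnt_div_one_add_isEquivalent_nhdsGT_zero.trans
    binEnt_isEquivalent_nhdsGT_zero.symm
  refine ((isEquivalent_iff_tendsto_one hne).mp hequiv).congr fun δ => ?_
  simp [div_eq_inv_mul]

lemma tendsto_pow_div_pow_add_pow_nhdsGT_zero {a b : ℝ} (ha : 0 < a) (hab : a < b) :
    Tendsto (fun k : ℕ => a ^ k / (a ^ k + b ^ k)) atTop (𝓝[>] 0) := by
  have hb : 0 < b := ha.trans hab
  have hq : Tendsto (fun k : ℕ => (a / b) ^ k) atTop (𝓝 0) :=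
    tendsto_pow_atTop_nhds_zero_of_lt_one (by positivity) ((div_lt_one hb).mpr hab)
  refine tendsto_nhdsWithin_iff.mpr
    ⟨?_, Eventually.of_forall fun k => Set.mem_Ioi.mpr (by positivity)⟩
  have hlim := hq.div (hq.add_const 1) (by norm_num)
  rw [zero_div] at hlim
  refine hlim.congr fun k => ?_
  simp only [Pi.div_apply, div_pow]
  field_simp

theorem entropy_ratio_tendsto_one (ε : ℝ) (hε0 : 0 < ε) (hε : ε < 1/2) :
    Filter.Tendsto (fun k : ℕ =>
        (1 / binEnt (ε ^ k / (ε ^ k + (1 - ε) ^ k))) *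
          ((ε ^ k / (ε ^ k + (1 - ε) ^ k))
            + (1 + ε ^ k / (ε ^ k + (1 - ε) ^ k)) *
              binEnt ((ε ^ k / (ε ^ k + (1 - ε) ^ k))
                / (1 + ε ^ k / (ε ^ k + (1 - ε) ^ k)))))
      Filter.atTop (nhds 1) :=
  tendsto_binEnt_ratio_nhdsGT_zero.comp
    (tendsto_pow_div_pow_add_pow_nhdsGT_zero hε0 (by linarith))
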